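/- Let Σ and Σ* be m×m symmetric positive definite real matrices, and set a = ‖Σ*^{-1/2}(Σ − Σ*)Σ*^{-1/2}‖_F and b = ‖Σ^{-1/2}(Σ* − Σ)Σ^{-1/2}‖_F. If a < 1, then a/(1+a) ≤ b ≤ a/(1−a). -/

import Mathlib

open Matrix

/-- Squared Frobenius norm of a real matrix. -/
noncomputable def frobSq {m n : ℕ} (A : Matrix (Fin m) (Fin n) ℝ) : ℝ :=
  Matrix.trace (Aᵀ * A)

/-- Frobenius norm of a real matrix. -/
noncomputable def frob {m n : ℕ} (A : Matrix (Fin m) (Fin n) ℝ) : ℝ :=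
  Real.sqrt (frobSq A)

section
open scoped ComplexOrder

/-- The positive semidefinite square root of a positive semidefinite matrix
(Mathlib's former `Matrix.PosSemidef.sqrt`, removed since; restored with its old definition). -/
noncomputable def Matrix.PosSemidef.sqrt {n 𝕜 : Type*} [Fintype n] [RCLike 𝕜] [DecidableEq n]
    {A : Matrix n n 𝕜} (hA : A.PosSemidef) : Matrix n n 𝕜 :=
  hA.1.eigenvectorUnitary.1 * diagonal ((↑) ∘ Real.sqrt ∘ hA.1.eigenvalues) *
    (star hA.1.eigenvectorUnitary : Matrix n n 𝕜)
end

/-! Put `R = Σ*^{1/2}` and `P = R⁻¹ Σ R⁻¹`, a symmetric matrix with eigenvalues `λᵢ`. Since `R`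
is symmetric, cyclicity of the trace gives `a² = tr ((Σ Σ*⁻¹ - 1)²)` and
`b² = tr ((Σ* Σ⁻¹ - 1)²)`; as `Σ Σ*⁻¹ = R P R⁻¹` and `Σ* Σ⁻¹ = R P⁻¹ R⁻¹`, these are
`∑ (λᵢ - 1)²` and `∑ (λᵢ⁻¹ - 1)²`. Every `|λᵢ - 1| ≤ a < 1`, so `λᵢ ∈ [1 - a, 1 + a]`, and
`(λᵢ⁻¹ - 1)² = (λᵢ - 1)² / λᵢ²` lies between `(λᵢ - 1)² / (1 + a)²` and `(λᵢ - 1)² / (1 - a)²`;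
summing gives the two bounds. -/

section sqrt
open scoped ComplexOrder
variable {n 𝕜 : Type*} [Fintype n] [RCLike 𝕜] [DecidableEq n] {A : Matrix n n 𝕜}

lemma Matrix.PosSemidef.sqrt_mul_self (hA : A.PosSemidef) : hA.sqrt * hA.sqrt = A := by
  have hU : star (hA.1.eigenvectorUnitary : Matrix n n 𝕜) * hA.1.eigenvectorUnitary = 1 :=
    Unitary.coe_star_mul_self _
  unfold Matrix.PosSemidef.sqrt
  conv_rhs => rw [hA.1.spectral_theorem, Unitary.conjStarAlgAut_apply]
  simp only [mul_assoc]
  rw [← mul_assoc (star (hA.1.eigenvectorUnitary : Matrix n n 𝕜)), hU, one_mul,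
    ← mul_assoc (diagonal _) (diagonal _), diagonal_mul_diagonal]
  congr 3
  funext i
  simp only [Function.comp_apply]
  rw [← RCLike.ofReal_mul, Real.mul_self_sqrt (hA.eigenvalues_nonneg i)]

lemma Matrix.PosSemidef.isHermitian_sqrt (hA : A.PosSemidef) : hA.sqrt.IsHermitian :=
  ((posSemidef_diagonal_iff.mpr fun i ↦ by simp).mul_mul_conjTranspose_same _).1

lemma Matrix.PosDef.isUnit_det_sqrt (hA : A.PosDef) : IsUnit hA.posSemidef.sqrt.det := by
  have h : IsUnit (hA.posSemidef.sqrt.det * hA.posSemidef.sqrt.det) := by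
    rw [← det_mul, hA.posSemidef.sqrt_mul_self, ← isUnit_iff_isUnit_det]
    exact hA.isUnit
  exact isUnit_of_mul_isUnit_left h

end sqrt

section spectral
variable {n 𝕜 : Type*} [Fintype n] [DecidableEq n] [RCLike 𝕜] {P : Matrix n n 𝕜}

lemma Matrix.IsHermitian.trace_cfc (hP : P.IsHermitian) (f : ℝ → ℝ) :
    trace (cfc f P) = ∑ i, (f (hP.eigenvalues i) : 𝕜) := by
  rw [hP.cfc_eq, IsHermitian.cfc, Unitary.conjStarAlgAut_apply, trace_mul_cycle,
    Unitary.coe_star_mul_self, one_mul, trace_diagonal]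
  rfl

lemma Matrix.IsHermitian.trace_sub_one_sq (hP : P.IsHermitian) :
    trace ((P - 1) ^ 2) = ∑ i, (((hP.eigenvalues i - 1) ^ 2 : ℝ) : 𝕜) := by
  have hcfc : (P - 1) ^ 2 = cfc (fun x : ℝ ↦ (x - 1) ^ 2) P := by
    rw [cfc_pow (fun x : ℝ ↦ x - 1) 2 P, cfc_sub (fun x : ℝ ↦ x) (fun _ ↦ 1) P, cfc_id' ℝ P,
      cfc_const_one ℝ P]
  rw [hcfc, hP.trace_cfc]

lemma Matrix.IsHermitian.trace_inv_sub_one_sq (hP : P.IsHermitian) (hP_unit : IsUnit P) :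
    trace ((P⁻¹ - 1) ^ 2) = ∑ i, ((((hP.eigenvalues i)⁻¹ - 1) ^ 2 : ℝ) : 𝕜) := by
  have hcont (f : ℝ → ℝ) : ContinuousOn f (spectrum ℝ P) := P.finite_real_spectrum.continuousOn f
  have hcfc : (P⁻¹ - 1) ^ 2 = cfc (fun x : ℝ ↦ (x⁻¹ - 1) ^ 2) P := by
    rw [cfc_pow (fun x : ℝ ↦ x⁻¹ - 1) 2 P (hcont _),
      cfc_sub (fun x : ℝ ↦ x⁻¹) (fun _ ↦ 1) P (hcont _), cfc_ringInverse_id P hP_unit,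
      cfc_const_one ℝ P, nonsing_inv_eq_ringInverse]
  rw [hcfc, hP.trace_cfc]

end spectral

section conj
variable {n α : Type*} [Fintype n] [DecidableEq n] [CommRing α] {R : Matrix n n α}

lemma Matrix.trace_conj_sub_one_sq (hR : IsUnit R.det) (Y : Matrix n n α) :
    trace ((R * Y * R⁻¹ - 1) ^ 2) = trace ((Y - 1) ^ 2) := by
  have hconj : R * Y * R⁻¹ - 1 = R * (Y - 1) * R⁻¹ := by
    rw [mul_sub, sub_mul, mul_one, mul_nonsing_inv R hR]
  have hconj_sq : (R * Y * R⁻¹ - 1) ^ 2 = R * (Y - 1) ^ 2 * R⁻¹ := by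
    rw [hconj, sq, sq]
    simp only [mul_assoc, nonsing_inv_mul_cancel_left _ _ hR]
  rw [hconj_sq, trace_mul_cycle, nonsing_inv_mul R hR, one_mul]

lemma Matrix.sub_mul_self_mul_inv (hR : IsUnit R.det) (S : Matrix n n α) :
    (S - R * R) * (R * R)⁻¹ = R * (R⁻¹ * S * R⁻¹) * R⁻¹ - 1 := by
  rw [Matrix.mul_inv_rev, sub_mul]
  simp only [mul_assoc, mul_nonsing_inv_cancel_left _ _ hR, mul_nonsing_inv _ hR]

lemma Matrix.mul_self_sub_mul_inv (hR : IsUnit R.det) {S : Matrix n n α} (hS : IsUnit S.det) :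
    (R * R - S) * S⁻¹ = R * (R⁻¹ * S * R⁻¹)⁻¹ * R⁻¹ - 1 := by
  rw [Matrix.mul_inv_rev, Matrix.mul_inv_rev, nonsing_inv_nonsing_inv R hR, sub_mul]
  simp only [mul_assoc, mul_nonsing_inv _ hS, mul_nonsing_inv _ hR, mul_one]

end conj

lemma frobSq_mul_mul_of_isSymm {m : ℕ} {W C : Matrix (Fin m) (Fin m) ℝ} (hW : W.IsSymm)
    (hC : C.IsSymm) : frobSq (W * C * W) = trace ((C * (W * W)) ^ 2) := by
  have hWCW : (W * C * W)ᵀ = W * C * W := by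
    rw [transpose_mul, transpose_mul, hW.eq, hC.eq, mul_assoc]
  rw [frobSq, hWCW, sq, show W * C * W * (W * C * W) = W * (C * (W * W) * (C * W)) by
    simp only [mul_assoc], trace_mul_comm]
  simp only [mul_assoc]

lemma Matrix.PosDef.frobSq_sqrt_inv_mul_mul {m : ℕ} {A C : Matrix (Fin m) (Fin m) ℝ}
    (hA : A.PosDef) (hC : C.IsSymm) :
    frobSq (hA.posSemidef.sqrt⁻¹ * C * hA.posSemidef.sqrt⁻¹) = trace ((C * A⁻¹) ^ 2) := by
  have hW : hA.posSemidef.sqrt⁻¹.IsSymm := by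
    rw [IsSymm, transpose_nonsing_inv,
      (isHermitian_iff_isSymm.mp hA.posSemidef.isHermitian_sqrt).eq]
  rw [frobSq_mul_mul_of_isSymm hW hC, ← Matrix.mul_inv_rev, hA.posSemidef.sqrt_mul_self]

lemma sq_inv_sub_one_bounds {a x : ℝ} (hx : |x - 1| ≤ a) (ha : a < 1) :
    (x - 1) ^ 2 / (1 + a) ^ 2 ≤ (x⁻¹ - 1) ^ 2 ∧ (x⁻¹ - 1) ^ 2 ≤ (x - 1) ^ 2 / (1 - a) ^ 2 := by
  obtain ⟨hlo, hhi⟩ := abs_le.mp hx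
  have hx0 : 0 < x := by linarith
  have hinv : (x⁻¹ - 1) ^ 2 = (x - 1) ^ 2 / x ^ 2 := by field_simp; ring
  rw [hinv]
  exact ⟨div_le_div_of_nonneg_left (sq_nonneg _) (by positivity)
      (pow_le_pow_left₀ hx0.le (by linarith) 2),
    div_le_div_of_nonneg_left (sq_nonneg _) (by nlinarith)
      (pow_le_pow_left₀ (by linarith) (by linarith) 2)⟩

lemma sqrt_sum_sq_inv_sub_one_bounds {ι : Type*} [Fintype ι] (x : ι → ℝ)
    (ha : √(∑ i, (x i - 1) ^ 2) < 1) :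
    √(∑ i, (x i - 1) ^ 2) / (1 + √(∑ i, (x i - 1) ^ 2)) ≤ √(∑ i, ((x i)⁻¹ - 1) ^ 2) ∧
      √(∑ i, ((x i)⁻¹ - 1) ^ 2) ≤ √(∑ i, (x i - 1) ^ 2) / (1 - √(∑ i, (x i - 1) ^ 2)) := by
  set a := √(∑ i, (x i - 1) ^ 2)
  have ha0 : 0 ≤ a := Real.sqrt_nonneg _
  have hsum : ∑ i, (x i - 1) ^ 2 = a ^ 2 := (Real.sq_sqrt (by positivity)).symm
  have hx i : |x i - 1| ≤ a :=
    Real.abs_le_sqrt (Finset.single_le_sum (fun j _ ↦ sq_nonneg (x j - 1)) (Finset.mem_univ i))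
  constructor
  · rw [Real.le_sqrt (by positivity) (by positivity), div_pow, ← hsum, Finset.sum_div]
    exact Finset.sum_le_sum fun i _ ↦ (sq_inv_sub_one_bounds (hx i) ha).1
  · rw [Real.sqrt_le_left (div_nonneg ha0 (by linarith)), div_pow, ← hsum, Finset.sum_div]
    exact Finset.sum_le_sum fun i _ ↦ (sq_inv_sub_one_bounds (hx i) ha).2

/-- With `a = ‖S*^{-1/2}(S−S*)S*^{-1/2}‖_F` and `b = ‖S^{-1/2}(S*−S)S^{-1/2}‖_F`,
if `a < 1` then `a/(1+a) ≤ b ≤ a/(1−a)`. -/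
theorem frob_ratio_bounds {m : ℕ}
    (S Sstar : Matrix (Fin m) (Fin m) ℝ)
    (hS : S.PosDef) (hSstar : Sstar.PosDef)
    (ha : frob (hSstar.posSemidef.sqrt⁻¹ * (S - Sstar) * hSstar.posSemidef.sqrt⁻¹) < 1) :
    frob (hSstar.posSemidef.sqrt⁻¹ * (S - Sstar) * hSstar.posSemidef.sqrt⁻¹)
        / (1 + frob (hSstar.posSemidef.sqrt⁻¹ * (S - Sstar) * hSstar.posSemidef.sqrt⁻¹))
      ≤ frob (hS.posSemidef.sqrt⁻¹ * (Sstar - S) * hS.posSemidef.sqrt⁻¹) ∧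
    frob (hS.posSemidef.sqrt⁻¹ * (Sstar - S) * hS.posSemidef.sqrt⁻¹)
      ≤ frob (hSstar.posSemidef.sqrt⁻¹ * (S - Sstar) * hSstar.posSemidef.sqrt⁻¹)
          / (1 - frob (hSstar.posSemidef.sqrt⁻¹ * (S - Sstar) * hSstar.posSemidef.sqrt⁻¹)) := by
  set R := hSstar.posSemidef.sqrt
  have hRR : R * R = Sstar := hSstar.posSemidef.sqrt_mul_self
  have hR : IsUnit R.det := hSstar.isUnit_det_sqrt
  have hR_herm : R.IsHermitian := hSstar.posSemidef.isHermitian_sqrt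
  have hS_unit : IsUnit S.det := hS.det_pos.ne'.isUnit
  set P := R⁻¹ * S * R⁻¹
  have hP : P.IsHermitian := by
    simpa only [conjTranspose_nonsing_inv, hR_herm.eq] using
      isHermitian_conjTranspose_mul_mul R⁻¹ hS.isHermitian
  have hP_unit : IsUnit P := by
    rw [isUnit_iff_isUnit_det, det_mul, det_mul]
    exact ((isUnit_nonsing_inv_det R hR).mul hS_unit).mul (isUnit_nonsing_inv_det R hR)
  have hC : (S - Sstar).IsSymm :=
    (isHermitian_iff_isSymm.mp hS.isHermitian).sub (isHermitian_iff_isSymm.mp hSstar.isHermitian)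
  have ha_eq : frob (R⁻¹ * (S - Sstar) * R⁻¹) = √(∑ i, (hP.eigenvalues i - 1) ^ 2) := by
    rw [frob, hSstar.frobSq_sqrt_inv_mul_mul hC, ← hRR, sub_mul_self_mul_inv hR,
      trace_conj_sub_one_sq hR, hP.trace_sub_one_sq]
    rfl
  have hb_eq : frob (hS.posSemidef.sqrt⁻¹ * (Sstar - S) * hS.posSemidef.sqrt⁻¹) =
      √(∑ i, ((hP.eigenvalues i)⁻¹ - 1) ^ 2) := by
    rw [frob, hS.frobSq_sqrt_inv_mul_mul (by rw [← neg_sub]; exact hC.neg), ← hRR,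
      mul_self_sub_mul_inv hR hS_unit, trace_conj_sub_one_sq hR, hP.trace_inv_sub_one_sq hP_unit]
    rfl
  rw [ha_eq, hb_eq]
  exact sqrt_sum_sq_inv_sub_one_bounds _ (ha_eq ▸ ha)
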